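/- arXiv:1910.00471 — 2 statements merged into one kernel-verified Lean document; each statement's English description precedes it below -/
import Mathlib

section
/- Let Γ be a finite simple graph on a vertex set V partitioned into disjoint sets A (system vertices) and R (environment vertices), let G be the group of graph automorphisms σ of Γ with σ(A) = A, and let λ : (V → 𝔽₂) → ℝ be G-invariant, i.e., λ(u ∘ σ) = λ(u) for all σ ∈ G and u : V → 𝔽₂. Define h(a,b)(i) = a(i) + Σ_{j ∈ R} Γ_{A→R}(i,j) · b(j) in 𝔽₂ for a : A → 𝔽₂, b : R → 𝔽₂, and set F(a) = Σ_{b : R → 𝔽₂} Σ_{u : V → 𝔽₂, u|_A = h(a,b)} λ(u). Then F is invariant under G: F(a ∘ σ|_A) = F(a) for all σ ∈ G and a : A → 𝔽₂. -/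
/-- The map `h(a,b) = Γ_{A→R} b ⊕ a` from the partial-trace formula for decohered
graph states. -/
def hMap {V : Type*} [Fintype V] [DecidableEq V] (Γ : SimpleGraph V) [DecidableRel Γ.Adj]
    (A R : Finset V) (a : A → ZMod 2) (b : R → ZMod 2) : A → ZMod 2 :=
  fun i => a i + ∑ j : R, (if Γ.Adj (i : V) (j : V) then (1 : ZMod 2) else 0) * b j

/-- The function `F(a) = Σ_b Σ_{u : u|_A = h(a,b)} λ(u)` is invariant under the
partition-preserving automorphism group, provided `λ` is. -/
theorem stmt_13 {V : Type*} [Fintype V] [DecidableEq V] (Γ : SimpleGraph V)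
    [DecidableRel Γ.Adj] (A R : Finset V)
    (hdisj : Disjoint A R) (hcover : A ∪ R = Finset.univ)
    (lam : (V → ZMod 2) → ℝ)
    (hlam : ∀ σ : Equiv.Perm V, (∀ i j, Γ.Adj (σ i) (σ j) ↔ Γ.Adj i j) →
      (∀ v, v ∈ A ↔ σ v ∈ A) → ∀ u : V → ZMod 2, lam (u ∘ ⇑σ) = lam u)
    (σ : Equiv.Perm V) (hadj : ∀ i j, Γ.Adj (σ i) (σ j) ↔ Γ.Adj i j)
    (hA : ∀ v, v ∈ A ↔ σ v ∈ A) (hR : ∀ v, v ∈ R ↔ σ v ∈ R)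
    (a : A → ZMod 2) :
    (∑ b : R → ZMod 2, ∑ u ∈ Finset.univ.filter
        (fun u : V → ZMod 2 =>
          (fun i : A => u i) = hMap Γ A R (fun i => a ⟨σ i.1, (hA i.1).mp i.2⟩) b),
        lam u) =
      ∑ b : R → ZMod 2, ∑ u ∈ Finset.univ.filter
        (fun u : V → ZMod 2 => (fun i : A => u i) = hMap Γ A R a b), lam u := by
  have hAinv : ∀ v, v ∈ A ↔ σ.symm v ∈ A := fun v => by
    conv_lhs => rw [← σ.apply_symm_apply v]
    exact (hA (σ.symm v)).symm
  have hRinv : ∀ v, v ∈ R ↔ σ.symm v ∈ R := fun v => by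
    conv_lhs => rw [← σ.apply_symm_apply v]
    exact (hR (σ.symm v)).symm
  set eR : ({x // x ∈ R}) ≃ ({x // x ∈ R}) :=
    { toFun := fun j => ⟨σ j, (hR j).mp j.2⟩
      invFun := fun j => ⟨σ.symm j, (hRinv j).mp j.2⟩
      left_inv := fun j => by simp
      right_inv := fun j => by simp } with heR
  have key : ∀ (b : R → ZMod 2) (u : V → ZMod 2),
      ((fun i : A => u i) = hMap Γ A R (fun i => a ⟨σ i.1, (hA i.1).mp i.2⟩) b) ↔
      ((fun i : A => (u ∘ ⇑σ.symm) i) = hMap Γ A R a (fun j => b (eR.symm j))) := by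
    intro b u
    constructor
    · intro h
      funext i
      have h1 := congrFun h ⟨σ.symm i, (hAinv i).mp i.2⟩
      simp only [hMap, Function.comp] at h1 ⊢
      rw [h1]
      congr 1
      · congr 1
        exact Subtype.ext (σ.apply_symm_apply i)
      · refine Fintype.sum_equiv eR _ _ fun j => ?_
        simp only [heR, Equiv.coe_fn_mk, Equiv.coe_fn_symm_mk, Equiv.symm_apply_apply]
        congr 1
        have := hadj (σ.symm (i : V)) (j : V)
        rw [σ.apply_symm_apply] at this
        simp [this]
    · intro h
      funext i
      have h1 := congrFun h ⟨σ i, (hA i.1).mp i.2⟩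
      simp only [hMap, Function.comp, σ.symm_apply_apply] at h1 ⊢
      rw [h1]
      congr 1
      refine (Fintype.sum_equiv eR _ _ fun j => ?_).symm
      simp only [heR, Equiv.coe_fn_mk, Equiv.coe_fn_symm_mk, Equiv.symm_apply_apply]
      congr 1
      have := hadj (i : V) (j : V)
      simp [this]
  refine Fintype.sum_equiv (Equiv.arrowCongr eR (Equiv.refl (ZMod 2))) _ _ fun b => ?_
  refine Finset.sum_nbij' (fun u => u ∘ ⇑σ.symm) (fun u => u ∘ ⇑σ) ?_ ?_ ?_ ?_ ?_
  · intro u hu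
    simp only [Finset.mem_filter, Finset.mem_univ, true_and] at hu ⊢
    have harr : ((eR.arrowCongr (Equiv.refl (ZMod 2))) b) = fun j => b (eR.symm j) := rfl
    rw [harr]
    exact (key b u).mp hu
  · intro u hu
    simp only [Finset.mem_filter, Finset.mem_univ, true_and] at hu ⊢
    refine (key b (u ∘ ⇑σ)).mpr ?_
    have hco : (u ∘ ⇑σ) ∘ ⇑σ.symm = u := by funext v; simp
    rw [hco]
    have harr : ((eR.arrowCongr (Equiv.refl (ZMod 2))) b) = fun j => b (eR.symm j) := rfl
    rw [harr] at hu
    exact hu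
  · intro u _; funext v; simp
  · intro u _; funext v; simp
  · intro u _
    have := hlam σ hadj hA (u ∘ ⇑σ.symm)
    have h2 : (u ∘ ⇑σ.symm) ∘ ⇑σ = u := by funext v; simp
    rw [h2] at this
    exact this
end

section
/- Let p₁, p₂, p₃ ≥ 0 be real numbers with p₁ + p₂ + p₃ = 1. Then the Pauli channel with probability vector p_{1/2} = (1/2, p₁/2, p₂/2, p₃/2) satisfies the antidegradability criterion; explicitly, 2·((1/2)² + (p₁/2)² + (p₂/2)² + (p₃/2)²) − 8·√((1/2)·(p₁/2)·(p₂/2)·(p₃/2)) ≤ 1. -/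
/-- The Pauli channel with probability vector `(1/2, p₁/2, p₂/2, p₃/2)` satisfies the
antidegradability criterion. -/
theorem stmt_14 (p₁ p₂ p₃ : ℝ) (h1 : 0 ≤ p₁) (h2 : 0 ≤ p₂) (h3 : 0 ≤ p₃)
    (hsum : p₁ + p₂ + p₃ = 1) :
    2 * ((1 / 2) ^ 2 + (p₁ / 2) ^ 2 + (p₂ / 2) ^ 2 + (p₃ / 2) ^ 2) -
        8 * Real.sqrt ((1 / 2) * (p₁ / 2) * (p₂ / 2) * (p₃ / 2)) ≤ 1 := by
  have hs : 0 ≤ Real.sqrt ((1 / 2) * (p₁ / 2) * (p₂ / 2) * (p₃ / 2)) := Real.sqrt_nonneg _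
  have hsq : p₁ ^ 2 + p₂ ^ 2 + p₃ ^ 2 ≤ 1 := by
    nlinarith [mul_nonneg h1 h2, mul_nonneg h1 h3, mul_nonneg h2 h3]
  nlinarith
end
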